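/- arXiv:0912.3123 — 3 statements merged into one kernel-verified Lean document; each statement's English description precedes it below -/
import Mathlib

section
/- Let R be a commutative ring and let t be the power series variable. For all α₁, β₁, α₂, β₂ ∈ R, the Hadamard (coefficientwise) product of the formal power series ((1−α₁t)(1−β₁t))⁻¹ and ((1−α₂t)(1−β₂t))⁻¹ in R[[t]] equals (1 − α₁β₁α₂β₂t²) · ((1−α₁α₂t)(1−α₁β₂t)(1−β₁α₂t)(1−β₁β₂t))⁻¹. -/
open PowerSeries

/-- The Hadamard (coefficientwise) product of two formal power series. -/
noncomputable def hadamardProduct {R : Type*} [CommRing R] (f g : PowerSeries R) :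
    PowerSeries R :=
  PowerSeries.mk fun n => PowerSeries.coeff n f * PowerSeries.coeff n g

namespace HadamardAux

variable {R : Type*} [CommRing R]

/-- complete homogeneous in two variables -/
def hseq (a b : R) (n : ℕ) : R := ∑ i ∈ Finset.range (n + 1), a ^ i * b ^ (n - i)

lemma hseq_zero (a b : R) : hseq a b 0 = 1 := by simp [hseq]

lemma hseq_succ (a b : R) (n : ℕ) :
    hseq a b (n + 1) = a * hseq a b n + b ^ (n + 1) := by
  rw [hseq, Finset.sum_range_succ' (fun i => a ^ i * b ^ (n + 1 - i)) (n + 1)]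
  simp only [pow_zero, one_mul, Nat.sub_zero, hseq, Finset.mul_sum]
  congr 1
  apply Finset.sum_congr rfl
  intro i hi
  have : n + 1 - (i + 1) = n - i := by omega
  rw [this]
  ring

lemma hseq_rec (a b : R) (n : ℕ) :
    hseq a b (n + 2) = (a + b) * hseq a b (n + 1) - a * b * hseq a b n := by
  have h1 := hseq_succ a b (n + 1)
  have h2 := hseq_succ a b n
  have : b ^ (n + 2) = b * (hseq a b (n + 1) - a * hseq a b n) := by
    rw [h2]; ring
  rw [h1, this]; ring

/-- multiply a sequence's generating series by (1 - a X) -/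
def dmul (a : R) (f : ℕ → R) : ℕ → R
  | 0 => f 0
  | n + 1 => f (n + 1) - a * f n

lemma mk_mul_one_sub (f : ℕ → R) (a : R) :
    PowerSeries.mk f * (1 - C a * X) = PowerSeries.mk (dmul a f) := by
  ext n
  rw [mul_sub, mul_one, map_sub]
  cases n with
  | zero =>
      simp [dmul, mul_comm, mul_assoc, PowerSeries.coeff_zero_eq_constantCoeff]
  | succ n =>
      have : PowerSeries.mk f * (C a * X) = (C a * PowerSeries.mk f) * X := by ring
      rw [this, coeff_succ_mul_X, coeff_mk, coeff_C_mul, coeff_mk]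
      simp [dmul]

lemma eq_invOfUnit {f g : PowerSeries R} (hf : constantCoeff f = 1) (h : g * f = 1) :
    g = invOfUnit f 1 := by
  have h2 : f * invOfUnit f 1 = 1 := mul_invOfUnit f 1 (by simpa using hf)
  calc g = g * (f * invOfUnit f 1) := by rw [h2, mul_one]
    _ = (g * f) * invOfUnit f 1 := by ring
    _ = invOfUnit f 1 := by rw [h, one_mul]

lemma mk_hseq_mul (a b : R) :
    PowerSeries.mk (hseq a b) * ((1 - C a * X) * (1 - C b * X)) = 1 := by
  rw [← mul_assoc, mk_mul_one_sub, mk_mul_one_sub]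
  ext n
  rw [coeff_mk]
  match n with
  | 0 => simp [dmul, hseq_zero]
  | 1 => simp [dmul, hseq_succ, hseq_zero, coeff_one]
  | (n + 2) =>
      simp only [dmul, hseq_rec, coeff_one]
      norm_num
      ring

lemma invOfUnit_eq_mk_hseq (a b : R) :
    invOfUnit ((1 - C a * X) * (1 - C b * X)) 1 = PowerSeries.mk (hseq a b) := by
  refine (eq_invOfUnit ?_ (mk_hseq_mul a b)).symm
  simp

lemma key (a₁ b₁ a₂ b₂ : R) :
    PowerSeries.mk (fun n => hseq a₁ b₁ n * hseq a₂ b₂ n) *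
      ((1 - C (a₁ * a₂) * X) * (1 - C (a₁ * b₂) * X) *
        (1 - C (b₁ * a₂) * X) * (1 - C (b₁ * b₂) * X)) =
      1 - C (a₁ * b₁ * a₂ * b₂) * X ^ 2 := by
  rw [← mul_assoc, ← mul_assoc, ← mul_assoc,
    mk_mul_one_sub, mk_mul_one_sub, mk_mul_one_sub, mk_mul_one_sub]
  ext n
  rw [coeff_mk, map_sub, coeff_one, coeff_C_mul, coeff_X_pow]
  match n with
  | 0 => simp [dmul, hseq_zero]
  | 1 => simp [dmul, hseq_succ, hseq_zero]; ring
  | 2 => simp [dmul, hseq_rec, hseq_succ, hseq_zero]; ring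
  | 3 => simp [dmul, hseq_rec, hseq_succ, hseq_zero]; ring
  | (n + 4) =>
      have h0 : n + 4 ≠ 0 := by omega
      have h2 : n + 4 ≠ 2 := by omega
      simp only [dmul, hseq_rec, if_neg h0, if_neg h2]
      ring

end HadamardAux

open HadamardAux in
/-- Lemma 7.1: the Hadamard product of `((1-α₁t)(1-β₁t))⁻¹` and `((1-α₂t)(1-β₂t))⁻¹`
equals `(1 - α₁β₁α₂β₂ t²) * ((1-α₁α₂t)(1-α₁β₂t)(1-β₁α₂t)(1-β₁β₂t))⁻¹`. -/
theorem hadamard_inv_one_sub_mul {R : Type*} [CommRing R] (α₁ β₁ α₂ β₂ : R) :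
    hadamardProduct
        (invOfUnit ((1 - C α₁ * X) * (1 - C β₁ * X)) 1)
        (invOfUnit ((1 - C α₂ * X) * (1 - C β₂ * X)) 1) =
      (1 - C (α₁ * β₁ * α₂ * β₂) * X ^ 2) *
        invOfUnit ((1 - C (α₁ * α₂) * X) * (1 - C (α₁ * β₂) * X) *
          (1 - C (β₁ * α₂) * X) * (1 - C (β₁ * β₂) * X)) 1 := by
  rw [invOfUnit_eq_mk_hseq, invOfUnit_eq_mk_hseq]
  have hH : hadamardProduct (PowerSeries.mk (hseq α₁ β₁)) (PowerSeries.mk (hseq α₂ β₂)) =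
      PowerSeries.mk (fun n => hseq α₁ β₁ n * hseq α₂ β₂ n) := by
    ext n; simp [hadamardProduct, coeff_mk]
  rw [hH]
  set P := (1 - C (α₁ * α₂) * X) * (1 - C (α₁ * β₂) * X) *
    (1 - C (β₁ * α₂) * X) * (1 - C (β₁ * β₂) * X) with hP
  have hc : constantCoeff P = 1 := by simp [hP]
  have h2 : P * invOfUnit P 1 = 1 := mul_invOfUnit P 1 (by simpa using hc)
  calc PowerSeries.mk (fun n => hseq α₁ β₁ n * hseq α₂ β₂ n)
      = PowerSeries.mk (fun n => hseq α₁ β₁ n * hseq α₂ β₂ n) * (P * invOfUnit P 1) := by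
        rw [h2, mul_one]
    _ = (PowerSeries.mk (fun n => hseq α₁ β₁ n * hseq α₂ β₂ n) * P) * invOfUnit P 1 := by
        ring
    _ = (1 - C (α₁ * β₁ * α₂ * β₂) * X ^ 2) * invOfUnit P 1 := by
        rw [hP, key]
end

section
/- Let R be a commutative ring and α, β, u ∈ R. In R[[t]] the following identity holds: (Σₙ hₙ·σₙ·tⁿ) · (1−αt)(1−βt)(1−αut)(1−βut) = 1 − αβu·t², where hₙ = Σ_{i=0}^{n} αⁱβ^{n−i} and σₙ = Σ_{j=0}^{n} uʲ. -/
open PowerSeries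

private theorem euler_key {R : Type*} [CommRing R] (α β u : R) (h s : ℕ → R)
    (h0 : h 0 = 1) (h1 : h 1 = α + β)
    (hrec : ∀ n, h (n + 2) = (α + β) * h (n + 1) - α * β * h n)
    (s0 : s 0 = 1) (s1 : s 1 = 1 + u)
    (srec : ∀ n, s (n + 2) = (1 + u) * s (n + 1) - u * s n) :
    (PowerSeries.mk fun n => h n * s n) *
      ((1 - C α * X) * (1 - C β * X) *
        (1 - C (α * u) * X) * (1 - C (β * u) * X)) =
      1 - C (α * β * u) * X ^ 2 := by
  have Pexp : (1 - C α * X) * (1 - C β * X) *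
        (1 - C (α * u) * X) * (1 - C (β * u) * X)
      = C 1 * X ^ 0 - C ((α + β) * (1 + u)) * X ^ 1
        + C (α * β + α * α * u + 2 * (α * β * u) + β * β * u + α * β * u * u) * X ^ 2
        - C ((α * α * β * u + α * β * β * u) * (1 + u)) * X ^ 3
        + C (α * α * β * β * u * u) * X ^ 4 := by
    simp only [map_mul, map_add, map_one, map_sub, map_ofNat]
    ring
  have key : ∀ (c : R) (k n : ℕ),
      (coeff n) ((PowerSeries.mk fun n => h n * s n) * (C c * X ^ k)) =
        if k ≤ n then c * (h (n - k) * s (n - k)) else 0 := by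
    intro c k n
    rw [show (PowerSeries.mk fun n => h n * s n) * (C c * X ^ k)
        = ((PowerSeries.mk fun n => h n * s n) * C c) * X ^ k by ring,
      PowerSeries.coeff_mul_X_pow']
    split <;> simp [PowerSeries.coeff_mul_C, coeff_mk, mul_comm]
  have expand : ∀ F A B G D E : R⟦X⟧, F * (A - B + G - D + E)
      = F * A - F * B + F * G - F * D + F * E := by intros; ring
  ext n
  rw [Pexp, expand]
  simp only [LinearMap.map_add, LinearMap.map_sub, key, PowerSeries.coeff_one,
    PowerSeries.coeff_C_mul, PowerSeries.coeff_X_pow, mul_ite, mul_one, mul_zero]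
  match n with
  | 0 => simp [h0, s0]
  | 1 => simp [h0, h1, s0, s1]
  | 2 =>
    have e2 := hrec 0
    have f2 := srec 0
    norm_num [h0, h1, s0, s1, e2, f2]
    ring
  | 3 =>
    have e2 := hrec 0; have e3 := hrec 1
    have f2 := srec 0; have f3 := srec 1
    norm_num [h0, h1, s0, s1, e2, e3, f2, f3]
    ring
  | (m + 4) =>
    have e2 : h (m + 2) = (α + β) * h (m + 1) - α * β * h m := hrec m
    have e3 : h (m + 3) = (α + β) * h (m + 2) - α * β * h (m + 1) := hrec (m + 1)
    have e4 : h (m + 4) = (α + β) * h (m + 3) - α * β * h (m + 2) := hrec (m + 2)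
    have f2 : s (m + 2) = (1 + u) * s (m + 1) - u * s m := srec m
    have f3 : s (m + 3) = (1 + u) * s (m + 2) - u * s (m + 1) := srec (m + 1)
    have f4 : s (m + 4) = (1 + u) * s (m + 3) - u * s (m + 2) := srec (m + 2)
    simp only [show m + 4 - 1 = m + 3 by omega, show m + 4 - 2 = m + 2 by omega,
      show m + 4 - 3 = m + 1 by omega, show m + 4 - 4 = m by omega, Nat.sub_zero,
      if_pos (show (0:ℕ) ≤ m + 4 by omega), if_pos (show (1:ℕ) ≤ m + 4 by omega),
      if_pos (show (2:ℕ) ≤ m + 4 by omega), if_pos (show (3:ℕ) ≤ m + 4 by omega),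
      if_pos (show (4:ℕ) ≤ m + 4 by omega),
      if_neg (show ¬ (m + 4 = 0) by omega), if_neg (show ¬ (m + 4 = 2) by omega)]
    rw [e4, f4, e3, f3, e2, f2]
    ring

/-- The local Euler factor identity: with `hₙ = ∑_{i=0}^{n} αⁱβ^{n-i}` and
`σₙ = ∑_{j=0}^{n} uʲ`, one has
`(∑ₙ hₙσₙ tⁿ) * (1-αt)(1-βt)(1-αut)(1-βut) = 1 - αβu t²` in `R[[t]]`. -/
theorem euler_factor_identity {R : Type*} [CommRing R] (α β u : R) :
    (PowerSeries.mk fun n =>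
        (∑ i ∈ Finset.range (n + 1), α ^ i * β ^ (n - i)) *
        (∑ j ∈ Finset.range (n + 1), u ^ j)) *
      ((1 - C α * X) * (1 - C β * X) *
        (1 - C (α * u) * X) * (1 - C (β * u) * X)) =
      1 - C (α * β * u) * X ^ 2 := by
  have hstep : ∀ n, (∑ i ∈ Finset.range (n + 1 + 1), α ^ i * β ^ (n + 1 - i))
      = α * (∑ i ∈ Finset.range (n + 1), α ^ i * β ^ (n - i)) + β ^ (n + 1) := by
    intro n
    rw [Finset.sum_range_succ', Finset.mul_sum]
    simp only [Nat.succ_sub_succ, Nat.sub_zero, pow_zero, pow_succ, one_mul]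
    congr 1
    exact Finset.sum_congr rfl fun i _ => by ring
  have sstep : ∀ n, (∑ j ∈ Finset.range (n + 1 + 1), u ^ j)
      = u * (∑ j ∈ Finset.range (n + 1), u ^ j) + 1 := by
    intro n
    rw [Finset.sum_range_succ']
    simp [pow_succ, Finset.mul_sum, mul_comm]
  apply euler_key α β u
  · simp
  · simp [Finset.sum_range_succ, add_comm]
  · intro n
    have a1 := hstep n
    have a2 := hstep (n + 1)
    norm_num at a2 ⊢
    linear_combination a2 - β * a1
  · simp
  · simp [Finset.sum_range_succ]
  · intro n
    have a1 := sstep n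
    have a2 := sstep (n + 1)
    norm_num at a2 ⊢
    linear_combination a2 - a1
end

section
/- Let F be a field complete with respect to a discrete valuation, with induced nonarchimedean absolute value |·|. Let g be an invertible 2×2 matrix over F and let (r,s), (a,b), (c,d) ∈ F² be row vectors such that (a,b) ≠ (0,0), the vector (a,b)g does NOT lie in F²_< and the vector (c,d)g DOES lie in F²_<. Then ad − bc ≠ 0 and |1 − det([[a+r, b+s],[c, d]]) · (ad − bc)⁻¹| ≤ ‖(r,s)‖ · ‖g⁻¹‖ · |det g| / ‖(a,b)g‖. -/
open Matrix

/-- The norm of a 2×2 matrix: the maximum of the absolute values of its entries. -/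
noncomputable def matrixSupNorm {F : Type*} [NormedField F]
    (m : Matrix (Fin 2) (Fin 2) F) : ℝ :=
  max (max ‖m 0 0‖ ‖m 0 1‖) (max ‖m 1 0‖ ‖m 1 1‖)

lemma na_sub_eq {F : Type*} [NormedField F]
    (hna : IsNonarchimedean (norm : F → ℝ)) {x y : F} (h : ‖y‖ < ‖x‖) :
    ‖x - y‖ = ‖x‖ := by
  apply le_antisymm
  · calc ‖x - y‖ = ‖x + (-y)‖ := by ring_nf
    _ ≤ max ‖x‖ ‖-y‖ := hna x (-y)
    _ ≤ ‖x‖ := by rw [norm_neg]; exact max_le le_rfl h.le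
  · have hx : ‖x‖ ≤ max ‖x - y‖ ‖y‖ := by
      have h3 := hna (x - y) y
      simpa using h3
    rcases max_cases ‖x - y‖ ‖y‖ with ⟨he, _⟩ | ⟨he, _⟩
    · rwa [he] at hx
    · rw [he] at hx; exact absurd (lt_of_le_of_lt hx h) (lt_irrefl _)

/-- Lemma 3.6: for `g ∈ GL₂(F)` and row vectors `(r,s)`, `(a,b)`, `(c,d)` with
`(a,b) ≠ 0`, `(a,b)g ∉ F²_<` and `(c,d)g ∈ F²_<`, one has `ad - bc ≠ 0` and
`|1 - det([[a+r,b+s],[c,d]])·(ad-bc)⁻¹| ≤ ‖(r,s)‖·‖g⁻¹‖·|det g| / ‖(a,b)g‖`. -/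
theorem det_perturbation_bound {F : Type*} [NormedField F] [CompleteSpace F]
    (hna : IsNonarchimedean (norm : F → ℝ))
    (hdisc : ∃ π : F, 0 < ‖π‖ ∧ ‖π‖ < 1 ∧ ∀ x : F, x ≠ 0 → ∃ n : ℤ, ‖x‖ = ‖π‖ ^ n)
    (g : Matrix (Fin 2) (Fin 2) F) (hg : IsUnit g.det)
    (r s a b c d : F) (hab : ¬(a = 0 ∧ b = 0))
    (h1 : ¬ (‖vecMul ![a, b] g 0‖ < ‖vecMul ![a, b] g 1‖))
    (h2 : ‖vecMul ![c, d] g 0‖ < ‖vecMul ![c, d] g 1‖) :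
    a * d - b * c ≠ 0 ∧
      ‖1 - ((a + r) * d - (b + s) * c) * (a * d - b * c)⁻¹‖ ≤
        max ‖r‖ ‖s‖ * matrixSupNorm g⁻¹ * ‖g.det‖ /
          max ‖vecMul ![a, b] g 0‖ ‖vecMul ![a, b] g 1‖ := by
  have hgdet : g.det ≠ 0 := hg.ne_zero
  set u0 := vecMul ![a, b] g 0 with hu0def
  set u1 := vecMul ![a, b] g 1 with hu1def
  set w0 := vecMul ![c, d] g 0 with hw0def
  set w1 := vecMul ![c, d] g 1 with hw1def
  have e0 : u0 = a * g 0 0 + b * g 1 0 := by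
    simp [hu0def, vecMul, dotProduct, Fin.sum_univ_two]
  have e1 : u1 = a * g 0 1 + b * g 1 1 := by
    simp [hu1def, vecMul, dotProduct, Fin.sum_univ_two]
  have e2 : w0 = c * g 0 0 + d * g 1 0 := by
    simp [hw0def, vecMul, dotProduct, Fin.sum_univ_two]
  have e3 : w1 = c * g 0 1 + d * g 1 1 := by
    simp [hw1def, vecMul, dotProduct, Fin.sum_univ_two]
  -- c and d in terms of w0, w1
  have hcd : ![c, d] = vecMul (vecMul ![c, d] g) g⁻¹ := by
    rw [vecMul_vecMul, mul_nonsing_inv g hg, vecMul_one]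
  have hc : c = w0 * g⁻¹ 0 0 + w1 * g⁻¹ 1 0 := by
    have := congrFun hcd 0
    simpa [vecMul, dotProduct, Fin.sum_univ_two, hw0def, hw1def] using this
  have hd : d = w0 * g⁻¹ 0 1 + w1 * g⁻¹ 1 1 := by
    have := congrFun hcd 1
    simpa [vecMul, dotProduct, Fin.sum_univ_two, hw0def, hw1def] using this
  -- u0 ≠ 0
  have hu1le : ‖u1‖ ≤ ‖u0‖ := le_of_not_gt h1
  have hu0ne : u0 ≠ 0 := by
    intro h0
    have hu1' : u1 = 0 := by
      have : ‖u1‖ ≤ 0 := by rw [← norm_eq_zero.mpr h0]; exact hu1le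
      exact norm_eq_zero.mp (le_antisymm this (norm_nonneg _))
    have hv : vecMul ![a, b] g = 0 := by
      funext i
      fin_cases i
      · exact h0
      · exact hu1'
    have hab0 : ![a, b] = (0 : Fin 2 → F) := by
      have h' := congrArg (fun v => vecMul v g⁻¹) hv
      simpa [vecMul_vecMul, mul_nonsing_inv g hg, vecMul_one] using h'
    exact hab ⟨congrFun hab0 0, congrFun hab0 1⟩
  have hu0pos : 0 < ‖u0‖ := norm_pos_iff.mpr hu0ne
  have hw1pos : 0 < ‖w1‖ := lt_of_le_of_lt (norm_nonneg _) h2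
  -- key determinant identity
  have hkey : (a * d - b * c) * g.det = u0 * w1 - u1 * w0 := by
    rw [e0, e1, e2, e3, Matrix.det_fin_two]
    ring
  have hlt : ‖u1 * w0‖ < ‖u0 * w1‖ := by
    rw [norm_mul, norm_mul]
    calc ‖u1‖ * ‖w0‖ ≤ ‖u0‖ * ‖w0‖ :=
          mul_le_mul_of_nonneg_right hu1le (norm_nonneg _)
      _ < ‖u0‖ * ‖w1‖ := by exact mul_lt_mul_of_pos_left h2 hu0pos
  have hnormkey : ‖a * d - b * c‖ * ‖g.det‖ = ‖u0‖ * ‖w1‖ := by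
    rw [← norm_mul, hkey, na_sub_eq hna hlt, norm_mul]
  have hDne : a * d - b * c ≠ 0 := by
    intro h0
    rw [h0, norm_zero, zero_mul] at hnormkey
    exact absurd hnormkey.symm (ne_of_gt (mul_pos hu0pos hw1pos))
  refine ⟨hDne, ?_⟩
  -- rewrite the main expression
  have hexpr : 1 - ((a + r) * d - (b + s) * c) * (a * d - b * c)⁻¹ =
      (s * c - r * d) * (a * d - b * c)⁻¹ := by
    field_simp
    ring
  rw [hexpr, norm_mul, norm_inv]
  -- norm bounds on c and d
  set N := matrixSupNorm g⁻¹ with hN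
  have hNb : ∀ i j, ‖g⁻¹ i j‖ ≤ N := by
    intro i j
    fin_cases i <;> fin_cases j <;>
      simp [hN, matrixSupNorm, le_max_iff, le_refl, true_or, or_true]
  have hw0le : ‖w0‖ ≤ ‖w1‖ := h2.le
  have hterm : ∀ (x : F) (i j : Fin 2), ‖x * g⁻¹ i j‖ ≤ ‖w1‖ * N → True := fun _ _ _ _ => trivial
  have hcle : ‖c‖ ≤ N * ‖w1‖ := by
    rw [hc]
    refine le_trans (hna _ _) (max_le ?_ ?_)
    · rw [norm_mul]
      calc ‖w0‖ * ‖g⁻¹ 0 0‖ ≤ ‖w1‖ * N :=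
            mul_le_mul hw0le (hNb 0 0) (norm_nonneg _) hw1pos.le
        _ = N * ‖w1‖ := mul_comm _ _
    · rw [norm_mul]
      calc ‖w1‖ * ‖g⁻¹ 1 0‖ ≤ ‖w1‖ * N :=
            mul_le_mul_of_nonneg_left (hNb 1 0) hw1pos.le
        _ = N * ‖w1‖ := mul_comm _ _
  have hdle : ‖d‖ ≤ N * ‖w1‖ := by
    rw [hd]
    refine le_trans (hna _ _) (max_le ?_ ?_)
    · rw [norm_mul]
      calc ‖w0‖ * ‖g⁻¹ 0 1‖ ≤ ‖w1‖ * N :=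
            mul_le_mul hw0le (hNb 0 1) (norm_nonneg _) hw1pos.le
        _ = N * ‖w1‖ := mul_comm _ _
    · rw [norm_mul]
      calc ‖w1‖ * ‖g⁻¹ 1 1‖ ≤ ‖w1‖ * N :=
            mul_le_mul_of_nonneg_left (hNb 1 1) hw1pos.le
        _ = N * ‖w1‖ := mul_comm _ _
  set M := max ‖r‖ ‖s‖ with hM
  have hMnn : 0 ≤ M := le_trans (norm_nonneg r) (le_max_left _ _)
  have hNnn : 0 ≤ N := le_trans (norm_nonneg _) (hNb 0 0)
  have hnum : ‖s * c - r * d‖ ≤ M * (N * ‖w1‖) := by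
    have h5 : ‖s * c - r * d‖ ≤ max ‖s * c‖ ‖r * d‖ := by
      have := hna (s * c) (-(r * d))
      simpa [sub_eq_add_neg] using this
    refine le_trans h5 (max_le ?_ ?_)
    · rw [norm_mul]
      exact mul_le_mul (le_max_right _ _) hcle (norm_nonneg _) hMnn
    · rw [norm_mul]
      exact mul_le_mul (le_max_left _ _) hdle (norm_nonneg _) hMnn
  -- put it together
  have hmaxu : max ‖u0‖ ‖u1‖ = ‖u0‖ := max_eq_left hu1le
  rw [hmaxu]
  have hdetpos : 0 < ‖g.det‖ := norm_pos_iff.mpr hgdet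
  have hDval : ‖a * d - b * c‖ = ‖u0‖ * ‖w1‖ / ‖g.det‖ := by
    field_simp
    linarith [hnormkey]
  rw [hDval, ← div_eq_mul_inv, div_le_div_iff₀ (by positivity) hu0pos]
  have hRHS : M * N * ‖g.det‖ * (‖u0‖ * ‖w1‖ / ‖g.det‖) = M * (N * ‖w1‖) * ‖u0‖ := by
    field_simp
  rw [hRHS]
  exact mul_le_mul_of_nonneg_right hnum hu0pos.le
end
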